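/- arXiv:1006.3247 — 3 statements merged into one kernel-verified Lean document; each statement's English description precedes it below -/
import Mathlib

section
/- For every real c > 0 and every integer p ≥ 1, the p-th moment of the free Poisson distribution of parameter c is given by ∫ x^p dπ_c(x) = Σ_{j=1}^{p} (1/p)·binom(p,j)·binom(p,j−1)·c^j (the coefficient of c^j being the Narayana number, which counts non-crossing partitions of {1,…,p} with j blocks). -/
open MeasureTheory Filter

noncomputable section

/-- the free Poisson (Marchenko–Pastur) measure of parameter `c`:
`max(1−c,0)·δ₀ + √(4c−(x−1−c)²)/(2πx)·1_{[1+c−2√c, 1+c+2√c]}(x) dx`. -/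
def MP (c : ℝ) : Measure ℝ :=
  (ENNReal.ofReal (max (1 - c) 0)) • Measure.dirac 0 +
    volume.withDensity fun x =>
      ENNReal.ofReal
        ((Set.Icc (1 + c - 2 * Real.sqrt c) (1 + c + 2 * Real.sqrt c)).indicator
          (fun y => Real.sqrt (4 * c - (y - 1 - c) ^ 2) / (2 * Real.pi * y)) x)

/-!
The substitution `x = 1 + c + 2√c t` turns the absolutely continuous part of `π_c` into
`(2c/π) √(1 - t²) dt` on `[-1, 1]`, and the atom at `0` does not see `x ^ p`. The weight
`√(1 - t²)` has odd moments `0` and even moments `π Cat(m) / (2 · 4^m)` (put `t = sin θ` and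
use Wallis' recursion), so expanding `(1 + c + 2√c t)^(p-1)` binomially gives Touchard's form
`∫ x^p dπ_c = Σ_m C(p-1, 2m) Cat(m) c^(m+1) (1 + c)^(p-1-2m)`.
Expanding `(1 + c)^(p-1-2m)` as well, the coefficient of `c^(i+1)` is
`Σ_m C(p-1, 2m) Cat(m) C(p-1-2m, i-m)`; multiplied by `p`, each summand becomes
`C(p, i) C(i, m) C(p-i, m+1)` (both are `p! / (m! (m+1)! (i-m)! (p-1-i-m)!)`), and Vandermonde's
convolution sums these to `C(p, i) C(p, i+1)`.
-/

open Finset Real intervalIntegral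
open scoped Nat

theorem add_pow_eq_sum_range {R : Type*} [CommSemiring R] (x y : R) {n N : ℕ} (h : n < N) :
    (x + y) ^ n = ∑ k ∈ range N, x ^ k * y ^ (n - k) * n.choose k := by
  rw [add_pow]
  refine sum_subset (range_subset_range.2 h) fun k _ hk => ?_
  simp [Nat.choose_eq_zero_of_lt (not_lt.1 (mt mem_range.2 hk))]

theorem sum_range_two_mul {M : Type*} [AddCommMonoid M] (g : ℕ → M) (n : ℕ) :
    ∑ k ∈ range (2 * n), g k = ∑ m ∈ range n, (g (2 * m) + g (2 * m + 1)) := by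
  induction n with
  | zero => simp
  | succ n ih => rw [mul_add_one, sum_range_succ, sum_range_succ, sum_range_succ, ih, add_assoc]

theorem pow_mul_one_add_pow_eq_sum_Ico {R : Type*} [CommSemiring R] (x : R) {m n N : ℕ}
    (h : m + n < N) :
    x ^ m * (1 + x) ^ n = ∑ i ∈ Ico m N, (n.choose (i - m) : R) * x ^ i := by
  rw [add_comm 1 x, add_pow_eq_sum_range x 1 (by omega : n < N - m), mul_sum, sum_Ico_eq_sum_range]
  refine sum_congr rfl fun k _ => ?_
  rw [Nat.add_sub_cancel_left, pow_add]
  ring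

theorem sum_mul_pow_mul_one_add_pow {R : Type*} [CommSemiring R] (a : ℕ → R) (n : ℕ → ℕ)
    {N : ℕ} (h : ∀ m < N, m + n m < N) (x : R) :
    ∑ m ∈ range N, a m * x ^ m * (1 + x) ^ n m =
      ∑ i ∈ range N, (∑ m ∈ range (i + 1), a m * (n m).choose (i - m)) * x ^ i := by
  calc ∑ m ∈ range N, a m * x ^ m * (1 + x) ^ n m
      = ∑ m ∈ Ico 0 N, ∑ i ∈ Ico m N, a m * (n m).choose (i - m) * x ^ i := by
        rw [← range_eq_Ico]
        refine sum_congr rfl fun m hm => ?_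
        rw [mul_assoc, pow_mul_one_add_pow_eq_sum_Ico x (h m (mem_range.1 hm)), mul_sum]
        simp only [mul_assoc]
    _ = _ := by
        rw [sum_Ico_Ico_comm]
        simp only [← range_eq_Ico, sum_mul]

theorem cast_catalan {K : Type*} [Field K] [CharZero K] (m : ℕ) :
    (catalan m : K) = (2 * m)! / (m ! * (m + 1)!) := by
  have h := succ_mul_catalan_eq_centralBinom m
  rw [Nat.centralBinom_eq_two_mul_choose] at h
  have h' : ((m + 1 : ℕ) : K) * catalan m = (2 * m)! / (m ! * m !) := by
    rw [← Nat.cast_mul, h, Nat.cast_choose K (by omega : m ≤ 2 * m),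
      show 2 * m - m = m by omega]
  rw [Nat.factorial_succ, Nat.cast_mul]
  field_simp
  push_cast at h' ⊢
  linear_combination h'

theorem succ_mul_choose_mul_catalan_mul_choose (m d e : ℕ) :
    (2 * m + d + e + 1) * ((2 * m + d + e).choose (2 * m) * catalan m * (d + e).choose d) =
      (2 * m + d + e + 1).choose (m + d) * (m + d).choose m * (m + e + 1).choose (m + 1) := by
  apply Nat.cast_injective (R := ℚ)
  push_cast
  rw [Nat.cast_choose ℚ (by omega : 2 * m ≤ 2 * m + d + e), cast_catalan,
    Nat.cast_choose ℚ (by omega : d ≤ d + e),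
    Nat.cast_choose ℚ (by omega : m + d ≤ 2 * m + d + e + 1),
    Nat.cast_choose ℚ (by omega : m ≤ m + d),
    Nat.cast_choose ℚ (by omega : m + 1 ≤ m + e + 1),
    show 2 * m + d + e - 2 * m = d + e by omega, show d + e - d = e by omega,
    show 2 * m + d + e + 1 - (m + d) = m + e + 1 by omega, show m + d - m = d by omega,
    show m + e + 1 - (m + 1) = e by omega, Nat.factorial_succ (2 * m + d + e)]
  push_cast
  field_simp

theorem succ_mul_choose_mul_catalan_mul_choose_sub {q i m : ℕ} (hmi : m ≤ i) :
    (q + 1) * (q.choose (2 * m) * catalan m * (q - 2 * m).choose (i - m)) =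
      (q + 1).choose i * i.choose m * (q + 1 - i).choose (m + 1) := by
  by_cases hiq : m + i ≤ q
  · obtain ⟨d, rfl⟩ := Nat.exists_eq_add_of_le hmi
    obtain ⟨e, rfl⟩ := Nat.exists_eq_add_of_le hiq
    rw [show m + (m + d) + e = 2 * m + d + e by ring, show 2 * m + d + e - 2 * m = d + e by omega,
      show m + d - m = d by omega, show 2 * m + d + e + 1 - (m + d) = m + e + 1 by omega]
    exact succ_mul_choose_mul_catalan_mul_choose m d e
  · have hr : (q + 1 - i).choose (m + 1) = 0 := Nat.choose_eq_zero_of_lt (by omega)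
    rcases le_or_gt (2 * m) q with h2m | h2m
    · simp [hr, Nat.choose_eq_zero_of_lt (by omega : q - 2 * m < i - m)]
    · simp [hr, Nat.choose_eq_zero_of_lt h2m]

theorem sum_range_choose_mul_choose_succ (i n : ℕ) :
    ∑ m ∈ range (i + 1), i.choose m * n.choose (m + 1) = (i + n).choose (i + 1) := by
  rw [add_comm i n, Nat.add_choose_eq, Nat.sum_antidiagonal_eq_sum_range_succ_mk,
    sum_range_succ' _ (i + 1)]
  simp only [Nat.sub_zero, Nat.choose_succ_self, mul_zero, add_zero]
  refine sum_congr rfl fun m hm => ?_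
  rw [mul_comm, show i + 1 - (m + 1) = i - m by omega,
    Nat.choose_symm (by simpa [Nat.lt_succ_iff] using hm)]

theorem succ_mul_sum_choose_mul_catalan_mul_choose (q i : ℕ) :
    (q + 1) * ∑ m ∈ range (i + 1), q.choose (2 * m) * catalan m * (q - 2 * m).choose (i - m) =
      (q + 1).choose i * (q + 1).choose (i + 1) := by
  rw [mul_sum, sum_congr rfl fun m hm =>
    succ_mul_choose_mul_catalan_mul_choose_sub (Nat.lt_succ_iff.1 (mem_range.1 hm))]
  simp only [mul_assoc, ← mul_sum, sum_range_choose_mul_choose_succ]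
  rcases le_or_gt i (q + 1) with hi | hi
  · rw [Nat.add_sub_cancel' hi]
  · simp [Nat.choose_eq_zero_of_lt hi]

theorem sum_choose_mul_catalan_mul_pow_mul_one_add_pow {K : Type*} [Field K] [CharZero K]
    (q : ℕ) (c : K) :
    ∑ m ∈ range (q + 1),
        (q.choose (2 * m) * catalan m : K) * c ^ (m + 1) * (1 + c) ^ (q - 2 * m) =
      ∑ j ∈ Icc 1 (q + 1),
        1 / ((q + 1 : ℕ) : K) * (q + 1).choose j * (q + 1).choose (j - 1) * c ^ j := by
  have coeff (i : ℕ) :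
      ∑ m ∈ range (i + 1), (q.choose (2 * m) * catalan m : K) * (q - 2 * m).choose (i - m) =
        1 / ((q + 1 : ℕ) : K) * (q + 1).choose (i + 1) * (q + 1).choose i := by
    have := congrArg (Nat.cast : ℕ → K) (succ_mul_sum_choose_mul_catalan_mul_choose q i)
    push_cast at this ⊢
    field_simp
    linear_combination this
  calc _ = c * ∑ m ∈ range (q + 1),
        (q.choose (2 * m) * catalan m : K) * c ^ m * (1 + c) ^ (q - 2 * m) := by
        rw [mul_sum]
        exact sum_congr rfl fun m _ => by ring
    _ = ∑ i ∈ range (q + 1), 1 / ((q + 1 : ℕ) : K) * (q + 1).choose (i + 1) *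
        (q + 1).choose i * c ^ (i + 1) := by
        rw [sum_mul_pow_mul_one_add_pow _ _ (fun m hm => by omega), mul_sum]
        exact sum_congr rfl fun i _ => by rw [coeff]; ring
    _ = _ := by
        rw [← Ico_add_one_right_eq_Icc, sum_Ico_eq_sum_range, Nat.add_sub_cancel]
        exact sum_congr rfl fun i _ => by rw [add_comm 1 i, Nat.add_sub_cancel]

theorem integral_sin_pow_two_mul (m : ℕ) :
    ∫ x in -(π / 2)..π / 2, sin x ^ (2 * m) = π * m.centralBinom / 4 ^ m := by
  induction m with
  | zero => simp
  | succ m ih =>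
    have h := congrArg (Nat.cast : ℕ → ℝ) (Nat.succ_mul_centralBinom_succ m)
    push_cast at h
    rw [mul_add_one, integral_sin_pow, ih]
    simp only [cos_neg, cos_pi_div_two, mul_zero, sub_zero, zero_div, zero_add]
    push_cast
    field_simp
    linear_combination (-2 * 4 ^ m) * h

theorem integral_pow_two_mul_mul_sqrt_one_sub_sq (m : ℕ) :
    ∫ t in (-1)..1, t ^ (2 * m) * √(1 - t ^ 2) = π * catalan m / (2 * 4 ^ m) := by
  have hpi : -(π / 2) ≤ π / 2 := by linarith [pi_pos]
  calc _ = ∫ t in sin (-(π / 2))..sin (π / 2), t ^ (2 * m) * √(1 - t ^ 2) := by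
        rw [sin_neg, sin_pi_div_two]
    _ = ∫ x in -(π / 2)..π / 2, sin x ^ (2 * m) * √(1 - sin x ^ 2) * cos x :=
        (integral_comp_mul_deriv (fun x _ => hasDerivAt_sin x) continuousOn_cos
          (by fun_prop)).symm
    _ = ∫ x in -(π / 2)..π / 2, (sin x ^ (2 * m) - sin x ^ (2 * m + 2)) := by
        refine integral_congr fun x hx => ?_
        rw [Set.uIcc_of_le hpi] at hx
        rw [← cos_eq_sqrt_one_sub_sin_sq hx.1 hx.2, mul_assoc, ← sq, cos_sq']
        ring
    _ = (∫ x in -(π / 2)..π / 2, sin x ^ (2 * m)) / (2 * m + 2) := by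
        have hint (n : ℕ) : IntervalIntegrable (fun x => sin x ^ n) volume (-(π / 2)) (π / 2) :=
          (continuous_sin.pow n).intervalIntegrable _ _
        rw [integral_sub (hint _) (hint _), integral_sin_pow]
        simp only [cos_neg, cos_pi_div_two, mul_zero, sub_zero, zero_div, zero_add]
        push_cast
        field_simp
        ring
    _ = π * catalan m / (2 * 4 ^ m) := by
        have h := congrArg (Nat.cast : ℕ → ℝ) (succ_mul_catalan_eq_centralBinom m)
        push_cast at h
        rw [integral_sin_pow_two_mul, ← h]
        field_simp

theorem integral_eq_zero_of_odd {f : ℝ → ℝ} (hf : ∀ x, f (-x) = -f x) (a : ℝ) :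
    ∫ x in -a..a, f x = 0 := by
  have h := integral_comp_neg (a := -a) (b := a) f
  simp only [hf, intervalIntegral.integral_neg, neg_neg] at h
  linarith

theorem integral_pow_two_mul_add_one_mul_sqrt_one_sub_sq (m : ℕ) :
    ∫ t in (-1)..1, t ^ (2 * m + 1) * √(1 - t ^ 2) = 0 :=
  integral_eq_zero_of_odd (fun t => by rw [Odd.neg_pow (odd_two_mul_add_one m), neg_sq, neg_mul]) 1

theorem integral_add_mul_pow_mul_sqrt_one_sub_sq (u s : ℝ) (q : ℕ) :
    ∫ t in (-1)..1, (u + 2 * s * t) ^ q * √(1 - t ^ 2) =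
      π / 2 * ∑ m ∈ range (q + 1),
        (q.choose (2 * m) * catalan m : ℝ) * s ^ (2 * m) * u ^ (q - 2 * m) := by
  have hint (k : ℕ) : IntervalIntegrable (fun t => t ^ k * √(1 - t ^ 2)) volume (-1) 1 :=
    (by fun_prop : Continuous fun t : ℝ => t ^ k * √(1 - t ^ 2)).intervalIntegrable _ _
  calc _ = ∫ t in (-1)..1, ∑ k ∈ range (2 * (q + 1)),
        (2 * s) ^ k * u ^ (q - k) * q.choose k * (t ^ k * √(1 - t ^ 2)) := by
        refine integral_congr fun t _ => ?_
        rw [add_comm u, add_pow_eq_sum_range _ _ (by omega : q < 2 * (q + 1)), sum_mul]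
        exact sum_congr rfl fun k _ => by ring
    _ = ∑ k ∈ range (2 * (q + 1)), (2 * s) ^ k * u ^ (q - k) * q.choose k *
        ∫ t in (-1)..1, t ^ k * √(1 - t ^ 2) := by
        rw [integral_finsetSum fun k _ => (hint k).const_mul _]
        simp only [intervalIntegral.integral_const_mul]
    _ = _ := by
        rw [sum_range_two_mul, mul_sum]
        refine sum_congr rfl fun m _ => ?_
        rw [integral_pow_two_mul_mul_sqrt_one_sub_sq,
          integral_pow_two_mul_add_one_mul_sqrt_one_sub_sq, mul_pow, pow_mul]
        field_simp
        ring

theorem integral_mul_sqrt_sq_sub_sq (f : ℝ → ℝ) (a : ℝ) {r : ℝ} (hr : 0 ≤ r) :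
    ∫ x in (a - r)..(a + r), f x * √(r ^ 2 - (x - a) ^ 2) =
      r ^ 2 * ∫ t in (-1)..1, f (a + r * t) * √(1 - t ^ 2) := by
  have h := smul_integral_comp_add_mul (E := ℝ) (a := -1) (b := 1)
    (f := fun x => f x * √(r ^ 2 - (x - a) ^ 2)) r a
  rw [mul_neg_one, mul_one, ← sub_eq_add_neg] at h
  rw [← h, smul_eq_mul, ← intervalIntegral.integral_const_mul,
    ← intervalIntegral.integral_const_mul]
  refine integral_congr fun t _ => ?_
  rw [add_sub_cancel_left, show r ^ 2 - (r * t) ^ 2 = r ^ 2 * (1 - t ^ 2) by ring,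
    sqrt_mul (sq_nonneg r), sqrt_sq hr]
  ring

def mpDensity (c x : ℝ) : ℝ :=
  (Set.Icc (1 + c - 2 * √c) (1 + c + 2 * √c)).indicator
    (fun y => √(4 * c - (y - 1 - c) ^ 2) / (2 * π * y)) x

theorem MP_eq (c : ℝ) :
    MP c = ENNReal.ofReal (max (1 - c) 0) • Measure.dirac 0 +
      volume.withDensity fun x => ENNReal.ofReal (mpDensity c x) := rfl

theorem measurable_mpDensity (c : ℝ) : Measurable (mpDensity c) :=
  (Measurable.div (by fun_prop) (by fun_prop)).indicator measurableSet_Icc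

theorem mpDensity_nonneg {c : ℝ} (hc : 0 ≤ c) (x : ℝ) : 0 ≤ mpDensity c x := by
  refine Set.indicator_nonneg (fun y hy => div_nonneg (sqrt_nonneg _) ?_) x
  have ha : 0 ≤ 1 + c - 2 * √c := by nlinarith [sq_nonneg (1 - √c), sq_sqrt hc]
  have : 0 ≤ y := ha.trans hy.1
  positivity

theorem mpDensity_mul_pow_succ (c x : ℝ) (q : ℕ) :
    mpDensity c x * x ^ (q + 1) =
      (Set.Icc (1 + c - 2 * √c) (1 + c + 2 * √c)).indicator
        (fun y => y ^ q * √(4 * c - (y - 1 - c) ^ 2) / (2 * π)) x := by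
  rw [mpDensity, ← Set.indicator_mul_left (g := fun y => y ^ (q + 1))]
  congr 1
  funext y
  rcases eq_or_ne y 0 with rfl | hy
  -- at `y = 0` the square root vanishes, as `4c - (1 + c)² = -(1 - c)²`
  · rw [sqrt_eq_zero'.2 (by nlinarith [sq_nonneg (1 - c)])]
    simp
  · field_simp
    ring

theorem integral_pow_succ_MP {c : ℝ} (hc : 0 ≤ c) (q : ℕ) :
    ∫ x, x ^ (q + 1) ∂MP c = ∫ x in (1 + c - 2 * √c)..(1 + c + 2 * √c),
      x ^ q * √(4 * c - (x - 1 - c) ^ 2) / (2 * π) := by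
  set g : ℝ → ℝ := fun y => y ^ q * √(4 * c - (y - 1 - c) ^ 2) / (2 * π)
  set I := Set.Icc (1 + c - 2 * √c) (1 + c + 2 * √c)
  have hmeas : Measurable fun x => ENNReal.ofReal (mpDensity c x) :=
    ENNReal.measurable_ofReal.comp (measurable_mpDensity c)
  have hfin : ∀ᵐ x ∂volume, ENNReal.ofReal (mpDensity c x) < ⊤ :=
    ae_of_all _ fun _ => ENNReal.ofReal_lt_top
  have hdens (x : ℝ) :
      (ENNReal.ofReal (mpDensity c x)).toReal • x ^ (q + 1) = I.indicator g x := by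
    rw [ENNReal.toReal_ofReal (mpDensity_nonneg hc x), smul_eq_mul, mpDensity_mul_pow_succ]
  have hg : Integrable (I.indicator g) :=
    (by fun_prop : Continuous g).integrableOn_Icc.integrable_indicator measurableSet_Icc
  rw [MP_eq, integral_add_measure
      ((integrable_dirac (by simp)).smul_measure ENNReal.ofReal_ne_top)
      ((integrable_withDensity_iff_integrable_smul' hmeas hfin).2 (by simpa only [hdens] using hg)),
    MeasureTheory.integral_smul_measure, integral_dirac,
    integral_withDensity_eq_integral_toReal_smul hmeas hfin]
  simp only [hdens, ne_eq, Nat.add_one_ne_zero, not_false_eq_true, zero_pow, smul_zero, zero_add]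
  rw [MeasureTheory.integral_indicator measurableSet_Icc, integral_Icc_eq_integral_Ioc,
    ← integral_of_le (by linarith [sqrt_nonneg c])]

theorem integral_pow_succ_MP_eq_sum {c : ℝ} (hc : 0 ≤ c) (q : ℕ) :
    ∫ x, x ^ (q + 1) ∂MP c = ∑ m ∈ range (q + 1),
      (q.choose (2 * m) * catalan m : ℝ) * c ^ (m + 1) * (1 + c) ^ (q - 2 * m) := by
  have hsq : (2 * √c) ^ 2 = 4 * c := by rw [mul_pow, sq_sqrt hc]; ring
  calc ∫ x, x ^ (q + 1) ∂MP c
      = ∫ x in (1 + c) - 2 * √c..(1 + c) + 2 * √c,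
          x ^ q / (2 * π) * √((2 * √c) ^ 2 - (x - (1 + c)) ^ 2) := by
        rw [integral_pow_succ_MP hc, hsq]
        exact integral_congr fun x _ => by ring_nf
    _ = (2 * √c) ^ 2 / (2 * π) *
          ∫ t in (-1)..1, (1 + c + 2 * √c * t) ^ q * √(1 - t ^ 2) := by
        simp only [integral_mul_sqrt_sq_sub_sq _ _ (by positivity : 0 ≤ 2 * √c),
          div_mul_eq_mul_div, intervalIntegral.integral_div]
    _ = _ := by
        rw [integral_add_mul_pow_mul_sqrt_one_sub_sq, hsq, mul_sum, mul_sum]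
        refine sum_congr rfl fun m _ => ?_
        rw [pow_mul, sq_sqrt hc]
        field_simp
        ring

/-- **Moments of the free Poisson distribution.** For `c > 0` and `p ≥ 1`,
`∫ x^p dπ_c(x) = Σ_{j=1}^p (1/p) C(p,j) C(p,j−1) c^j`, the coefficients being the
Narayana numbers. -/
theorem free_poisson_moments (c : ℝ) (hc : 0 < c) (p : ℕ) (hp : 1 ≤ p) :
    ∫ x, x ^ p ∂(MP c) =
      ∑ j ∈ Finset.Icc 1 p,
        (1 / (p : ℝ)) * (p.choose j : ℝ) * (p.choose (j - 1) : ℝ) * c ^ j := by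
  obtain ⟨q, rfl⟩ : ∃ q, p = q + 1 := ⟨p - 1, by omega⟩
  rw [integral_pow_succ_MP_eq_sum hc.le, sum_choose_mul_catalan_mul_pow_mul_one_add_pow]
end
end

section
/- For every real c > 0, ∫ x log x dπ_c(x) = 1/2 + c·log c if c ≥ 1, and ∫ x log x dπ_c(x) = c²/2 if 0 < c < 1. -/
/-!
Substituting `x = 1 + c + 2√c cos θ` turns `∫ x log x dπ_c` into `(2c/π) J(√c)` with
`J(r) = ∫₀^π sin²θ log(1 + r² + 2r cos θ) dθ` (`sinSqLogIntegral`); the atom does not contribute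
since `0 · log 0 = 0`.
For `|r| < 1`, `log(1 + r² + 2r cos θ) = 2 Re log(1 + r e^{iθ}) = ∑ 2(-1)ⁿ⁺¹ rⁿ cos(nθ) / n`, and
against `sin²θ` only the term `n = 2` survives, so `J(r) = πr²/4`. Since
`1 + r² + 2r cos θ = (r + cos θ)² + sin²θ ≥ sin²θ`, the integrands are uniformly bounded, and
dominated convergence extends the formula to `r = 1`. For `r ≥ 1`, factoring out `r²` gives
`J(r) = π log r + J(1/r)`.
-/

open MeasureTheory Filter

noncomputable section

open Real Set Topology

theorem integral_cos_int_mul (k : ℤ) :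
    ∫ θ in (0 : ℝ)..π, cos (k * θ) = if k = 0 then π else 0 := by
  split_ifs with hk
  · simp [hk]
  · have hk' : (k : ℝ) ≠ 0 := by exact_mod_cast hk
    simp [intervalIntegral.integral_comp_mul_left (fun x => cos x) hk', integral_cos,
      sin_int_mul_pi]

theorem integral_sin_sq_mul_cos_nat_mul (n : ℕ) :
    ∫ θ in (0 : ℝ)..π, sin θ ^ 2 * cos (n * θ) =
      (if n = 0 then π / 2 else 0) - if n = 2 then π / 4 else 0 := by
  have product_to_sum (θ : ℝ) : sin θ ^ 2 * cos (n * θ) =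
      cos ((n : ℤ) * θ) / 2 - cos (((n - 2 : ℤ) : ℝ) * θ) / 4 -
        cos (((n + 2 : ℤ) : ℝ) * θ) / 4 := by
    push_cast
    rw [sub_mul, add_mul, cos_sub, cos_add, cos_two_mul, sin_sq]
    ring
  simp_rw [product_to_sum]
  rw [intervalIntegral.integral_sub, intervalIntegral.integral_sub, intervalIntegral.integral_div,
    intervalIntegral.integral_div, intervalIntegral.integral_div, integral_cos_int_mul,
    integral_cos_int_mul, integral_cos_int_mul]
  · have h1 : ((n : ℤ) - 2 = 0) ↔ n = 2 := by omega
    have h2 : ¬ ((n : ℤ) + 2 = 0) := by omega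
    simp only [Nat.cast_eq_zero, h1, h2, if_false]
    split_ifs <;> ring
  all_goals apply Continuous.intervalIntegrable; fun_prop

theorem hasSum_log_one_add_sq_add_two_mul_cos {r : ℝ} (hr : |r| < 1) (θ : ℝ) :
    HasSum (fun n : ℕ => 2 * (-1) ^ (n + 1) * r ^ n / n * cos (n * θ))
      (log (1 + r ^ 2 + 2 * r * cos θ)) := by
  set z : ℂ := r * Complex.exp (θ * Complex.I)
  have hz : ‖z‖ < 1 := by simpa [z, Complex.norm_exp_ofReal_mul_I] using hr
  have hre (n : ℕ) : 2 * ((-1) ^ (n + 1) * z ^ n / n).re =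
      2 * (-1) ^ (n + 1) * r ^ n / n * cos (n * θ) := by
    have : (-1) ^ (n + 1) * z ^ n / n =
        (((-1) ^ (n + 1) * r ^ n / n : ℝ) : ℂ) * Complex.exp ((n * θ : ℝ) * Complex.I) := by
      simp only [z, mul_pow, ← Complex.exp_nat_mul]
      push_cast
      ring_nf
    rw [this, Complex.re_ofReal_mul, Complex.exp_ofReal_mul_I_re]
    ring
  have hnorm : ‖1 + z‖ ^ 2 = 1 + r ^ 2 + 2 * r * cos θ := by
    rw [Complex.sq_norm, Complex.normSq_apply]
    simp only [z, Complex.add_re, Complex.add_im, Complex.one_re, Complex.one_im,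
      Complex.re_ofReal_mul, Complex.im_ofReal_mul, Complex.exp_ofReal_mul_I_re,
      Complex.exp_ofReal_mul_I_im]
    linear_combination r ^ 2 * sin_sq_add_cos_sq θ
  have hlog : 2 * (Complex.log (1 + z)).re = log (1 + r ^ 2 + 2 * r * cos θ) := by
    rw [Complex.log_re, ← hnorm, log_pow]
    push_cast; ring
  rw [← hlog]
  simpa only [Complex.reCLM_apply, hre] using
    ((Complex.hasSum_taylorSeries_log hz).mapL Complex.reCLM).mul_left 2

def sinSqLogIntegral (r : ℝ) : ℝ :=
  ∫ θ in (0 : ℝ)..π, sin θ ^ 2 * log (1 + r ^ 2 + 2 * r * cos θ)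

theorem sinSqLogIntegral_of_abs_lt_one {r : ℝ} (hr : |r| < 1) :
    sinSqLogIntegral r = π * r ^ 2 / 4 := by
  set a : ℕ → ℝ := fun n => 2 * (-1) ^ (n + 1) * r ^ n / n
  have ha (n : ℕ) : |a n| ≤ 2 * |r| ^ n := by
    rcases n.eq_zero_or_pos with rfl | hn
    · simp [a]
    · simp only [a, abs_div, abs_mul, abs_pow, abs_neg, abs_one, one_pow, Nat.abs_cast]
      rw [abs_two, mul_one]
      exact div_le_self (by positivity) (Nat.one_le_cast.mpr hn)
  have hterms : HasSum (fun n : ℕ => ∫ θ in (0 : ℝ)..π, a n * (sin θ ^ 2 * cos (n * θ)))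
      (sinSqLogIntegral r) := by
    refine intervalIntegral.hasSum_integral_of_dominated_convergence (fun n _ => 2 * |r| ^ n)
      (fun n => ?_) (fun n => ae_of_all _ fun θ _ => ?_)
      (ae_of_all _ fun _ _ => (summable_geometric_of_lt_one (abs_nonneg r) hr).mul_left 2)
      intervalIntegrable_const (ae_of_all _ fun θ _ => ?_)
    · exact (by fun_prop : Continuous _).aestronglyMeasurable
    · rw [norm_mul, norm_mul, Real.norm_eq_abs, Real.norm_eq_abs, Real.norm_eq_abs,
        abs_of_nonneg (sq_nonneg (sin θ))]
      exact (mul_le_of_le_one_right (abs_nonneg _)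
        (mul_le_one₀ (sin_sq_le_one θ) (abs_nonneg _) (abs_cos_le_one _))).trans (ha n)
    · refine ((hasSum_log_one_add_sq_add_two_mul_cos hr θ).mul_left (sin θ ^ 2)).congr_fun
        fun n => ?_
      simp only [a]
      ring
  have hvalue : HasSum (fun n : ℕ => ∫ θ in (0 : ℝ)..π, a n * (sin θ ^ 2 * cos (n * θ)))
      (π * r ^ 2 / 4) := by
    simp only [intervalIntegral.integral_const_mul, integral_sin_sq_mul_cos_nat_mul]
    convert hasSum_single 2 fun n hn => ?_ using 1
    · simp only [Nat.reduceAdd, Nat.cast_ofNat, OfNat.ofNat_ne_zero, ↓reduceIte, zero_sub,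
        mul_neg, a]
      ring
    · rcases eq_or_ne n 0 with rfl | h0
      · simp [a]
      · simp [h0, hn]
  exact hterms.unique hvalue

theorem sin_sq_le_one_add_sq_add_two_mul_cos (r θ : ℝ) :
    sin θ ^ 2 ≤ 1 + r ^ 2 + 2 * r * cos θ := by
  nlinarith [sq_nonneg (r + cos θ), sin_sq_add_cos_sq θ]

theorem one_add_sq_add_two_mul_cos_pos (r : ℝ) {θ : ℝ} (hs : sin θ ≠ 0) :
    0 < 1 + r ^ 2 + 2 * r * cos θ :=
  (pow_pos (abs_pos.2 hs) 2).trans_le (by simpa using sin_sq_le_one_add_sq_add_two_mul_cos r θ)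

theorem abs_sin_sq_mul_log_le (r θ : ℝ) :
    |sin θ ^ 2 * log (1 + r ^ 2 + 2 * r * cos θ)| ≤ (1 + |r|) ^ 2 + 1 := by
  set u := 1 + r ^ 2 + 2 * r * cos θ
  have hsin : sin θ ^ 2 ≤ 1 := sin_sq_le_one θ
  have hu : u ≤ (1 + |r|) ^ 2 := by
    have : r * cos θ ≤ |r| := (le_abs_self _).trans <| by
      rw [abs_mul]; exact mul_le_of_le_one_right (abs_nonneg r) (abs_cos_le_one θ)
    nlinarith [sq_abs r]
  rcases eq_or_ne (sin θ) 0 with hs | hs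
  · simpa [hs] using (by positivity : (0 : ℝ) ≤ (1 + |r|) ^ 2 + 1)
  have hu0 : 0 < u := one_add_sq_add_two_mul_cos_pos r hs
  have hlog : |log u| ≤ u + u⁻¹ := abs_le.2
    ⟨by linarith [one_sub_inv_le_log_of_pos hu0, inv_pos.2 hu0],
      by linarith [log_le_sub_one_of_pos hu0, inv_pos.2 hu0]⟩
  have hdiv : sin θ ^ 2 * u⁻¹ ≤ 1 := by
    rw [← div_eq_mul_inv, div_le_one hu0]; exact (sin_sq_le_one_add_sq_add_two_mul_cos r θ)
  rw [abs_mul, abs_of_nonneg (sq_nonneg _)]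
  nlinarith [mul_le_mul_of_nonneg_left hlog (sq_nonneg (sin θ))]

theorem intervalIntegrable_sin_sq_mul_log (r a b : ℝ) :
    IntervalIntegrable (fun θ => sin θ ^ 2 * log (1 + r ^ 2 + 2 * r * cos θ)) volume a b :=
  intervalIntegrable_const.mono_fun' (by fun_prop : Measurable _).aestronglyMeasurable
    (ae_of_all _ fun θ => abs_sin_sq_mul_log_le r θ)

theorem sinSqLogIntegral_one : sinSqLogIntegral 1 = π / 4 := by
  have hlim : Tendsto sinSqLogIntegral (𝓝[<] 1) (𝓝 (sinSqLogIntegral 1)) := by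
    refine intervalIntegral.tendsto_integral_filter_of_dominated_convergence (fun _ => 5)
      (Eventually.of_forall fun r => (by fun_prop : Measurable _).aestronglyMeasurable) ?_
      intervalIntegrable_const (ae_of_all _ fun θ _ => ?_)
    · filter_upwards [Ioo_mem_nhdsLT (show (0 : ℝ) < 1 by norm_num)] with r hr
      refine ae_of_all _ fun θ _ => (abs_sin_sq_mul_log_le r θ).trans ?_
      rw [abs_of_pos hr.1]
      nlinarith [hr.1, hr.2]
    · rcases eq_or_ne (sin θ) 0 with hs | hs
      · simp [hs]
      refine (ContinuousAt.tendsto ?_).mono_left nhdsWithin_le_nhds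
      exact continuousAt_const.mul <| ContinuousAt.log (by fun_prop)
        (one_add_sq_add_two_mul_cos_pos 1 hs).ne'
  have hvalues : Tendsto sinSqLogIntegral (𝓝[<] 1) (𝓝 (π * 1 ^ 2 / 4)) := by
    refine ((by fun_prop : Continuous fun r : ℝ => π * r ^ 2 / 4).tendsto 1).mono_left
      nhdsWithin_le_nhds |>.congr' ?_
    filter_upwards [Ioo_mem_nhdsLT (show (-1 : ℝ) < 1 by norm_num)] with r hr
    exact (sinSqLogIntegral_of_abs_lt_one (abs_lt.2 hr)).symm
  simpa using tendsto_nhds_unique hlim hvalues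

theorem sinSqLogIntegral_of_nonneg_of_le_one {r : ℝ} (h0 : 0 ≤ r) (h1 : r ≤ 1) :
    sinSqLogIntegral r = π * r ^ 2 / 4 := by
  rcases h1.lt_or_eq with h1 | rfl
  · exact sinSqLogIntegral_of_abs_lt_one (abs_lt.2 ⟨by linarith, h1⟩)
  · simpa using sinSqLogIntegral_one

theorem sinSqLogIntegral_eq_log_add_inv {r : ℝ} (hr : r ≠ 0) :
    sinSqLogIntegral r = π * log |r| + sinSqLogIntegral r⁻¹ := by
  have hsplit (θ : ℝ) : sin θ ^ 2 * log (1 + r ^ 2 + 2 * r * cos θ) =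
      sin θ ^ 2 * (2 * log |r|) + sin θ ^ 2 * log (1 + r⁻¹ ^ 2 + 2 * r⁻¹ * cos θ) := by
    rcases eq_or_ne (sin θ) 0 with hs | hs
    · simp [hs]
    have hfactor : 1 + r ^ 2 + 2 * r * cos θ = r ^ 2 * (1 + r⁻¹ ^ 2 + 2 * r⁻¹ * cos θ) := by
      field_simp; ring
    rw [hfactor, log_mul (by positivity) (one_add_sq_add_two_mul_cos_pos r⁻¹ hs).ne', log_pow,
      ← log_abs r]
    push_cast; ring
  unfold sinSqLogIntegral
  simp_rw [hsplit]
  rw [intervalIntegral.integral_add (by apply Continuous.intervalIntegrable; fun_prop)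
      (intervalIntegrable_sin_sq_mul_log _ _ _),
    intervalIntegral.integral_mul_const, integral_sin_sq]
  simp only [sin_zero, cos_zero, mul_one, sin_pi, cos_pi, mul_neg, neg_zero, sub_self, zero_add,
    sub_zero, log_abs, inv_pow, add_left_inj]
  ring

theorem sinSqLogIntegral_of_one_le {r : ℝ} (hr : 1 ≤ r) :
    sinSqLogIntegral r = π * log r + π / (4 * r ^ 2) := by
  rw [sinSqLogIntegral_eq_log_add_inv (by positivity), abs_of_pos (by positivity),
    sinSqLogIntegral_of_nonneg_of_le_one (by positivity) (inv_le_one_of_one_le₀ hr)]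
  field_simp

theorem image_add_mul_cos_Icc (m : ℝ) {s : ℝ} (hs : 0 < s) :
    (fun θ => m + s * cos θ) '' Icc 0 π = Icc (m - s) (m + s) := by
  have : (fun θ => m + s * cos θ) = (s * · + m) ∘ cos := by ext; simp [add_comm]
  rw [this, image_comp, bijOn_cos.image_eq, image_affine_Icc' hs]
  congr 1 <;> ring

theorem injOn_add_mul_cos (m : ℝ) {s : ℝ} (hs : s ≠ 0) :
    InjOn (fun θ => m + s * cos θ) (Icc 0 π) := fun _ hx _ hy hxy =>
  injOn_cos hx hy (mul_left_cancel₀ hs (add_left_cancel hxy))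

theorem abs_mul_neg_sin_mul_sqrt_eq {s θ : ℝ} (m : ℝ) (hs : 0 ≤ s) (hθ : θ ∈ Icc 0 π) :
    |s * -sin θ| * √(s ^ 2 - (m + s * cos θ - m) ^ 2) = s ^ 2 * sin θ ^ 2 := by
  have hsin : 0 ≤ sin θ := sin_nonneg_of_nonneg_of_le_pi hθ.1 hθ.2
  have : s ^ 2 - (m + s * cos θ - m) ^ 2 = (s * sin θ) ^ 2 := by
    linear_combination (-s ^ 2) * sin_sq_add_cos_sq θ
  rw [this, sqrt_sq (by positivity), abs_mul, abs_neg, abs_of_nonneg hs, abs_of_nonneg hsin]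
  ring

theorem integral_Icc_sqrt_sq_sub_sq_mul (m : ℝ) {s : ℝ} (hs : 0 < s) (φ : ℝ → ℝ) :
    ∫ x in Icc (m - s) (m + s), √(s ^ 2 - (x - m) ^ 2) * φ x =
      s ^ 2 * ∫ θ in (0 : ℝ)..π, sin θ ^ 2 * φ (m + s * cos θ) := by
  rw [← image_add_mul_cos_Icc m hs, integral_image_eq_integral_abs_deriv_smul measurableSet_Icc
    (fun θ _ => ((hasDerivAt_cos θ).const_mul s |>.const_add m).hasDerivWithinAt)
    (injOn_add_mul_cos m hs.ne'), intervalIntegral.integral_of_le pi_pos.le,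
    ← integral_Icc_eq_integral_Ioc, ← integral_const_mul]
  refine setIntegral_congr_fun measurableSet_Icc fun θ hθ => ?_
  simp only [smul_eq_mul, ← mul_assoc, abs_mul_neg_sin_mul_sqrt_eq m hs.le hθ]

theorem integrableOn_Icc_sqrt_sq_sub_sq_mul_iff (m : ℝ) {s : ℝ} (hs : 0 < s) (φ : ℝ → ℝ) :
    IntegrableOn (fun x => √(s ^ 2 - (x - m) ^ 2) * φ x) (Icc (m - s) (m + s)) ↔
      IntervalIntegrable (fun θ => sin θ ^ 2 * φ (m + s * cos θ)) volume 0 π := by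
  rw [← image_add_mul_cos_Icc m hs, integrableOn_image_iff_integrableOn_abs_deriv_smul
    measurableSet_Icc
    (fun θ _ => ((hasDerivAt_cos θ).const_mul s |>.const_add m).hasDerivWithinAt)
    (injOn_add_mul_cos m hs.ne'), intervalIntegrable_iff_integrableOn_Icc_of_le pi_pos.le,
    integrableOn_congr_fun (g := fun θ => s ^ 2 * (sin θ ^ 2 * φ (m + s * cos θ)))
      (fun θ hθ => by simp only [smul_eq_mul, ← mul_assoc, abs_mul_neg_sin_mul_sqrt_eq m hs.le hθ])
      measurableSet_Icc]
  exact integrable_const_mul_iff (isUnit_iff_ne_zero.2 (by positivity)) _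

open scoped ENNReal in
theorem integral_smul_dirac_add_withDensity_ofReal {α : Type*} [MeasurableSpace α]
    [MeasurableSingletonClass α] {μ : Measure α} {k : ℝ≥0∞} (hk : k ≠ ∞) (x₀ : α) {ρ g : α → ℝ}
    (hρ : Measurable ρ) (hρ0 : ∀ x, 0 ≤ ρ x) (hρg : Integrable (fun x => ρ x * g x) μ) :
    ∫ x, g x ∂(k • Measure.dirac x₀ + μ.withDensity fun x => ENNReal.ofReal (ρ x)) =
      k.toReal * g x₀ + ∫ x, ρ x * g x ∂μ := by
  have hfin : ∀ᵐ x ∂μ, ENNReal.ofReal (ρ x) < ∞ := ae_of_all _ fun _ => ENNReal.ofReal_lt_top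
  have htoReal (x : α) : (ENNReal.ofReal (ρ x)).toReal = ρ x := ENNReal.toReal_ofReal (hρ0 x)
  rw [integral_add_measure ((integrable_dirac enorm_lt_top).smul_measure hk)
      ((integrable_withDensity_iff hρ.ennreal_ofReal hfin).2
        (by simpa only [htoReal, mul_comm] using hρg)),
    integral_smul_measure, integral_dirac,
    integral_withDensity_eq_integral_toReal_smul hρ.ennreal_ofReal hfin]
  simp only [htoReal, smul_eq_mul]

theorem integral_mul_log_MP {c : ℝ} (hc : 0 < c) :
    ∫ x, x * log x ∂(MP c) = 2 * c / π * sinSqLogIntegral (√c) := by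
  set I := Icc (1 + c - 2 * √c) (1 + c + 2 * √c)
  set ρ := I.indicator fun y => √(4 * c - (y - 1 - c) ^ 2) / (2 * π * y)
  have hρ0 (x : ℝ) : 0 ≤ ρ x := by
    refine indicator_nonneg (fun y hy => div_nonneg (sqrt_nonneg _) ?_) x
    have : 0 ≤ 1 + c - 2 * √c := by nlinarith [sq_nonneg (√c - 1), sq_sqrt hc.le]
    exact mul_nonneg (by positivity) (this.trans hy.1)
  have hρ : Measurable ρ := (by fun_prop : Measurable _).indicator measurableSet_Icc
  have hdensity : (fun x => ρ x * (x * log x)) =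
      I.indicator fun x => √((2 * √c) ^ 2 - (x - (1 + c)) ^ 2) * (log x / (2 * π)) := by
    ext x
    simp only [ρ, indicator_apply]
    split_ifs
    · rw [show (2 * √c) ^ 2 = 4 * c by rw [mul_pow, sq_sqrt hc.le]; norm_num, ← sub_sub]
      rcases eq_or_ne x 0 with rfl | hx
      · simp
      · field_simp
    · rw [zero_mul]
  have hangular : (fun θ => sin θ ^ 2 * (log (1 + c + 2 * √c * cos θ) / (2 * π))) =
      fun θ => (2 * π)⁻¹ * (sin θ ^ 2 * log (1 + √c ^ 2 + 2 * √c * cos θ)) := by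
    ext θ
    rw [sq_sqrt hc.le]
    ring
  rw [MP, integral_smul_dirac_add_withDensity_ofReal ENNReal.ofReal_ne_top 0 hρ hρ0, hdensity,
    integral_indicator measurableSet_Icc, integral_Icc_sqrt_sq_sub_sq_mul _ (by positivity)]
  · rw [log_zero, mul_zero, mul_zero, zero_add, hangular, intervalIntegral.integral_const_mul,
      ← sinSqLogIntegral, mul_pow, sq_sqrt hc.le]
    field_simp
  · rw [hdensity, integrable_indicator_iff measurableSet_Icc,
      integrableOn_Icc_sqrt_sq_sub_sq_mul_iff _ (by positivity), hangular]
    exact (intervalIntegrable_sin_sq_mul_log _ _ _).const_mul _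

/-- **Entropy integral of the free Poisson distribution.** For `c > 0`,
`∫ x log x dπ_c(x)` equals `1/2 + c log c` if `c ≥ 1` and `c²/2` if `0 < c < 1`.
(Note `Real.log 0 = 0`, which implements the convention `0·log 0 = 0` at the atom.) -/
theorem free_poisson_xlogx (c : ℝ) (hc : 0 < c) :
    ∫ x, x * Real.log x ∂(MP c) =
      if 1 ≤ c then 1 / 2 + c * Real.log c else c ^ 2 / 2 := by
  rw [integral_mul_log_MP hc]
  split_ifs with h1
  · rw [sinSqLogIntegral_of_one_le (one_le_sqrt.2 h1), log_sqrt hc.le, sq_sqrt hc.le]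
    field_simp
    ring
  · rw [sinSqLogIntegral_of_nonneg_of_le_one (sqrt_nonneg c) (sqrt_le_one.2 (by linarith)),
      sq_sqrt hc.le]
    field_simp
    ring
end
end

section
/- Let p ≥ 1 be an integer and let d ≥ 0 be a real parameter. For β ∈ S_{2p}, set S₂(β) = d·|β| + |β·γ̃^{-1}| + |β·δ| − p. Then: (i) if d = 0, S₂(β) ≥ −1, with equality if and only if β lies on the geodesic from δ to γ̃, i.e. |β·δ| + |β·γ̃^{-1}| = p−1; (ii) if 0 < d < 2, S₂(β) ≥ dp − 1, with equality if and only if β = δ; (iii) if d = 2, S₂(β) ≥ 2p − 1, with equality if and only if β lies on the geodesic from the identity to δ, i.e. |β| + |β·δ| = p; (iv) if d > 2, S₂(β) ≥ 2p − 1, with equality if and only if β = id. -/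
open Equiv Filter

noncomputable section

/-- length of a permutation: `|σ| = (size of ground set) − #σ`, the minimal number of
transpositions whose product is `σ` -/
def permLength {α : Type*} [Fintype α] [DecidableEq α] (σ : Equiv.Perm α) : ℕ :=
  σ.cycleType.sum - σ.cycleType.card

/-- the involution `δ ∈ S_{2p}`: `δ(i^T) = i^B`, `δ(i^B) = i^T`, on the ground set
`{1^T,…,p^T} ⊔ {1^B,…,p^B}` -/
def deltaPerm (p : ℕ) : Equiv.Perm (Fin p ⊕ Fin p) := Equiv.sumComm (Fin p) (Fin p)

/-- the permutation `γ ∈ S_{2p}`: `γ(i^T) = (i−1)^T`, `γ(i^B) = (i+1)^B` (mod `p`) -/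
def gammaPerm (p : ℕ) : Equiv.Perm (Fin p ⊕ Fin p) :=
  Equiv.sumCongr (finRotate p)⁻¹ (finRotate p)

/-- the full `2p`-cycle `γ̃ = (p^T ⋯ 2^T 1^T 1^B 2^B ⋯ p^B)`, which satisfies
`γ = (1^B p^T)·γ̃` -/
def gammaTilde (p : ℕ) (hp : 0 < p) : Equiv.Perm (Fin p ⊕ Fin p) :=
  Equiv.swap (Sum.inr (⟨0, hp⟩ : Fin p)) (Sum.inl (⟨p - 1, by omega⟩ : Fin p)) *
    gammaPerm p

/-- the quantity `S₂(β) = d|β| + |βγ̃⁻¹| + |βδ| − p` -/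
def S2 (p : ℕ) (hp : 0 < p) (d : ℝ) (β : Equiv.Perm (Fin p ⊕ Fin p)) : ℝ :=
  d * permLength β + (permLength (β * (gammaTilde p hp)⁻¹) : ℝ) +
    (permLength (β * deltaPerm p) : ℝ) - p

/-! Multiplying by a transposition changes the number of cycles by at most one, and a `k`-cycle
is a product of `k - 1` transpositions; hence `|στ| ≤ |σ| + |τ|`, so `(σ, τ) ↦ |σ⁻¹τ|` is a
metric on `S_{2p}`. Here `|δ| = p`, `|γ̃| = 2p - 1` (`γ̃` is a `2p`-cycle) and `|δγ̃⁻¹| = p - 1`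
(`δγ̃⁻¹` is an involution fixing `1^B` and `p^T`). With `A = |β|`, `G = |βγ̃⁻¹|` and `D = |βδ|`,
the triangle inequalities through `β` read `A + D ≥ p`, `A + G ≥ 2p - 1`, `D + G ≥ p - 1` and
`G ≤ D + p - 1`, and `S₂ = dA + G + D - p` is bounded below by a nonnegative combination of
them: for `0 < d < 2`, `2(S₂ - (dp - 1))` is the combination with weights `d, d, 2 - d`, and
tightness of all three forces `D = 0`; for `d ≥ 2`,
`S₂ - (2p - 1) = (d - 2)A + (A + D - p) + (A + G - (2p - 1))`. -/

open Equiv.Perm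
open scoped Finset

section PermLength

variable {α : Type*} [Fintype α] [DecidableEq α]

lemma card_cycleType_add_permLength (σ : Perm α) :
    Multiset.card σ.cycleType + permLength σ = #σ.support := by
  have : Multiset.card σ.cycleType • 1 ≤ σ.cycleType.sum :=
    Multiset.card_nsmul_le_sum fun _ h => (two_le_of_mem_cycleType h).trans' one_le_two
  rw [permLength, ← sum_cycleType]
  simp only [smul_eq_mul, mul_one] at this
  omega

lemma two_mul_card_cycleType_le (σ : Perm α) :
    2 * Multiset.card σ.cycleType ≤ #σ.support := by
  have := Multiset.card_nsmul_le_sum fun _ h => two_le_of_mem_cycleType (σ := σ) h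
  rwa [smul_eq_mul, mul_comm, sum_cycleType] at this

@[simp]
lemma permLength_one : permLength (1 : Perm α) = 0 := by
  simp [permLength]

@[simp]
lemma permLength_inv (σ : Perm α) : permLength σ⁻¹ = permLength σ := by
  simp [permLength]

lemma permLength_eq_zero_iff {σ : Perm α} : permLength σ = 0 ↔ σ = 1 := by
  refine ⟨fun h => card_cycleType_eq_zero.mp ?_, fun h => h ▸ permLength_one⟩
  have := card_cycleType_add_permLength σ
  have := two_mul_card_cycleType_le σ
  omega

lemma Equiv.Perm.IsCycle.permLength_eq {σ : Perm α} (hσ : σ.IsCycle) :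
    permLength σ = #σ.support - 1 := by
  simp [permLength, hσ.cycleType]

lemma Equiv.Perm.Disjoint.permLength_mul {σ τ : Perm α} (h : Disjoint σ τ) :
    permLength (σ * τ) = permLength σ + permLength τ := by
  have := card_cycleType_add_permLength σ
  have := card_cycleType_add_permLength τ
  have := card_cycleType_add_permLength (σ * τ)
  rw [h.cycleType_mul, h.card_support_mul, Multiset.card_add] at *
  omega

lemma two_mul_permLength_of_mul_self {σ : Perm α} (h : σ * σ = 1) :
    2 * permLength σ = #σ.support := by
  have hrep := cycleType_of_pow_prime_eq_one (p := 2) (by rwa [sq])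
  have hsum : σ.cycleType.sum = 2 * Multiset.card σ.cycleType := by
    rw [hrep, Multiset.sum_replicate, Multiset.card_replicate, smul_eq_mul, mul_comm]
  have := card_cycleType_add_permLength σ
  rw [← sum_cycleType] at this ⊢
  omega

lemma permLength_permCongr {β : Type*} [Fintype β] [DecidableEq β] (e : α ≃ β) (σ : Perm α) :
    permLength (e.permCongr σ) = permLength σ := by
  let f : α ≃ {_b : β // True} := e.trans (Equiv.subtypeUnivEquiv fun _ => trivial).symm
  have : σ.extendDomain f = e.permCongr σ := by
    ext x
    obtain ⟨y, rfl⟩ := e.surjective x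
    simpa [f] using extendDomain_apply_image σ f y
  rw [permLength, permLength, ← this, cycleType_extendDomain]

end PermLength

section SwapMul

variable {α : Type*} [DecidableEq α]

lemma pow_swap_mul_apply_of_not_sameCycle {σ : Perm α} {a b x : α}
    (ha : ¬σ.SameCycle x a) (hb : ¬σ.SameCycle x b) (n : ℕ) :
    ((swap a b * σ) ^ n) x = (σ ^ n) x := by
  induction n with
  | zero => rfl
  | succ n ih =>
    have hxa : σ ((σ ^ n) x) ≠ a := fun h =>
      ha ⟨(n + 1 : ℕ), by rwa [zpow_natCast, pow_succ', mul_apply]⟩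
    have hxb : σ ((σ ^ n) x) ≠ b := fun h =>
      hb ⟨(n + 1 : ℕ), by rwa [zpow_natCast, pow_succ', mul_apply]⟩
    rw [pow_succ', pow_succ', mul_apply, ih, mul_apply, mul_apply, swap_apply_of_ne_of_ne hxa hxb]

lemma sameCycle_swap_mul_iff_of_not_sameCycle [Finite α] {σ : Perm α} {a b x y : α}
    (ha : ¬σ.SameCycle x a) (hb : ¬σ.SameCycle x b) :
    (swap a b * σ).SameCycle x y ↔ σ.SameCycle x y := by
  refine ⟨fun h => ?_, fun h => ?_⟩
  · obtain ⟨n, -, rfl⟩ := h.exists_pow_eq'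
    exact ⟨n, by rw [zpow_natCast, pow_swap_mul_apply_of_not_sameCycle ha hb]⟩
  · obtain ⟨n, -, rfl⟩ := h.exists_pow_eq'
    exact ⟨n, by rw [zpow_natCast, pow_swap_mul_apply_of_not_sameCycle ha hb]⟩

lemma sameCycle_of_sameCycle_swap_mul [Finite α] {σ : Perm α} {a b x y : α}
    (hx : x = b ∨ ¬σ.SameCycle x a ∧ ¬σ.SameCycle x b)
    (hy : y = b ∨ ¬σ.SameCycle y a ∧ ¬σ.SameCycle y b)
    (h : (swap a b * σ).SameCycle x y) : σ.SameCycle x y := by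
  rcases hx with rfl | ⟨hxa, hxb⟩
  · rcases hy with rfl | ⟨hya, hyb⟩
    · exact SameCycle.refl _ _
    · exact ((sameCycle_swap_mul_iff_of_not_sameCycle hya hyb).1 h.symm).symm
  · exact (sameCycle_swap_mul_iff_of_not_sameCycle hxa hxb).1 h

end SwapMul

section NumCycles

variable {α : Type*} [Fintype α] [DecidableEq α]

/-- `#σ`, the number of cycles of `σ` with fixed points included. -/
def numCycles (σ : Perm α) : ℕ := Nat.card (Quotient (SameCycle.setoid σ))

lemma numCycles_eq_card_fixedPoints_add (σ : Perm α) :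
    numCycles σ = Fintype.card (Function.fixedPoints σ) + #σ.cycleFactorsFinset := by
  let cyc : Quotient (SameCycle.setoid σ) → Perm α :=
    Quotient.lift σ.cycleOf fun _ _ h => h.cycleOf_eq
  have fixed : Function.fixedPoints σ ≃ {q // cyc q = 1} := by
    refine Equiv.ofBijective
      (fun x => ⟨Quotient.mk _ x.1, (cycleOf_eq_one_iff σ).2 x.2⟩) ⟨?_, ?_⟩
    · rintro ⟨x, hx⟩ ⟨y, _⟩ hxy
      exact Subtype.ext (SameCycle.eq_of_left (Quotient.exact (congrArg Subtype.val hxy)) hx)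
    · rintro ⟨q, hq⟩
      induction q using Quotient.inductionOn with
      | h x => exact ⟨⟨x, (cycleOf_eq_one_iff σ).1 hq⟩, rfl⟩
  have moved : {q // cyc q ≠ 1} ≃ σ.cycleFactorsFinset := by
    refine Equiv.ofBijective (fun q => ⟨cyc q.1, ?_⟩) ⟨?_, ?_⟩
    · obtain ⟨q, hq⟩ := q
      induction q using Quotient.inductionOn with
      | h x => exact cycleOf_ne_one_iff_mem_cycleFactorsFinset.1 hq
    · rintro ⟨q, hq⟩ ⟨q', _⟩ hqq'
      induction q, q' using Quotient.inductionOn₂ with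
      | h x y =>
        have hxy : σ.cycleOf x = σ.cycleOf y := congrArg Subtype.val hqq'
        have hx : x ∈ (σ.cycleOf y).support := hxy ▸ mem_support_cycleOf_iff.2
          ⟨SameCycle.refl _ _, mem_support.2 ((cycleOf_eq_one_iff σ).not.1 hq)⟩
        exact Subtype.ext (Quotient.sound (mem_support_cycleOf_iff.1 hx).1.symm)
    · rintro ⟨c, hc⟩
      obtain ⟨x, hx⟩ := (mem_cycleFactorsFinset_iff.1 hc).1.nonempty_support
      exact ⟨⟨Quotient.mk _ x, by
        simpa [cyc, ← cycle_is_cycleOf hx hc] using (mem_cycleFactorsFinset_iff.1 hc).1.ne_one⟩,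
        Subtype.ext (cycle_is_cycleOf hx hc).symm⟩
  rw [numCycles, Nat.card_congr (Equiv.sumCompl fun q => cyc q = 1).symm, Nat.card_sum,
    ← Nat.card_congr fixed, Nat.card_congr moved]
  simp [Nat.card_eq_fintype_card]

lemma numCycles_add_permLength (σ : Perm α) : numCycles σ + permLength σ = Fintype.card α := by
  have hcard : Multiset.card σ.cycleType = #σ.cycleFactorsFinset := by simp [cycleType_def]
  have := card_cycleType_add_permLength σ
  have := sum_cycleType_le σ
  rw [numCycles_eq_card_fixedPoints_add, card_fixedPoints, ← hcard, sum_cycleType] at *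
  omega

lemma numCycles_le_numCycles_swap_mul (a b : α) (σ : Perm α) :
    numCycles σ ≤ numCycles (swap a b * σ) + 1 := by
  set τ := swap a b * σ
  -- Drop the cycle of `a` and send every other cycle to the `τ`-cycle through it, taking `b` as
  -- the representative of the cycle of `b`.
  let r : α → α := fun x => if σ.SameCycle x b then b else x
  let F : α → Option (Quotient (SameCycle.setoid τ)) := fun x =>
    if σ.SameCycle x a then none else some (Quotient.mk _ (r x))
  have hr (x : α) (hxa : ¬σ.SameCycle x a) :
      σ.SameCycle x (r x) ∧ (r x = b ∨ ¬σ.SameCycle (r x) a ∧ ¬σ.SameCycle (r x) b) := by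
    by_cases hxb : σ.SameCycle x b
    · rw [show r x = b from if_pos hxb]
      exact ⟨hxb, Or.inl rfl⟩
    · rw [show r x = x from if_neg hxb]
      exact ⟨SameCycle.refl _ _, Or.inr ⟨hxa, hxb⟩⟩
  have hF (x y : α) (hxy : σ.SameCycle x y) : F x = F y := by
    have ha : σ.SameCycle x a ↔ σ.SameCycle y a := ⟨hxy.symm.trans, hxy.trans⟩
    have hb : σ.SameCycle x b ↔ σ.SameCycle y b := ⟨hxy.symm.trans, hxy.trans⟩
    by_cases hya : σ.SameCycle y a
    · simp [F, ha, hya]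
    simp only [F, r, ha, hb, if_neg hya]
    split_ifs with hyb
    · rfl
    · exact congrArg some (Quotient.sound
        ((sameCycle_swap_mul_iff_of_not_sameCycle (ha.not.2 hya) (hb.not.2 hyb)).2 hxy))
  have hinj : Function.Injective (Quotient.lift (s := SameCycle.setoid σ) F hF) := by
    intro q q'
    induction q, q' using Quotient.inductionOn₂ with
    | h x y =>
      intro hxy
      change F x = F y at hxy
      apply Quotient.sound
      by_cases hxa : σ.SameCycle x a <;> by_cases hya : σ.SameCycle y a
      · exact hxa.trans hya.symm
      · simp [F, hxa, hya] at hxy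
      · simp [F, hxa, hya] at hxy
      simp only [F, if_neg hxa, if_neg hya, Option.some_inj] at hxy
      obtain ⟨hx, hx'⟩ := hr x hxa
      obtain ⟨hy, hy'⟩ := hr y hya
      exact hx.trans
        ((sameCycle_of_sameCycle_swap_mul hx' hy' (Quotient.exact hxy)).trans hy.symm)
  calc numCycles σ ≤ Nat.card (Option (Quotient (SameCycle.setoid τ))) :=
        Nat.card_le_card_of_injective _ hinj
    _ = numCycles τ + 1 := by simp [numCycles, Finite.card_option]

end NumCycles

section Triangle

variable {α : Type*} [Fintype α] [DecidableEq α]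

lemma permLength_swap_mul_le (a b : α) (σ : Perm α) :
    permLength (swap a b * σ) ≤ permLength σ + 1 := by
  have := numCycles_add_permLength σ
  have := numCycles_add_permLength (swap a b * σ)
  have := numCycles_le_numCycles_swap_mul a b σ
  omega

lemma permLength_formPerm_mul_le :
    ∀ (l : List α) (σ : Perm α), permLength (l.formPerm * σ) ≤ permLength σ + (l.length - 1)
  | [], σ => by simp
  | [x], σ => by simp
  | x :: y :: l, σ => by
    have := permLength_formPerm_mul_le (y :: l) σ
    have := permLength_swap_mul_le x y ((y :: l).formPerm * σ)
    rw [List.formPerm_cons_cons, mul_assoc]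
    simp only [List.length_cons, add_tsub_cancel_right] at *
    omega

lemma permLength_mul_le (σ τ : Perm α) : permLength (σ * τ) ≤ permLength σ + permLength τ := by
  induction σ using cycle_induction_on generalizing τ with
  | base_one => simp
  | base_cycles σ hσ =>
    obtain ⟨x, hx⟩ := hσ.nonempty_support
    have := permLength_formPerm_mul_le (σ.toList x) τ
    rwa [formPerm_toList, length_toList, hσ.cycleOf_eq (mem_support.1 hx), ← hσ.permLength_eq,
      add_comm] at this
  | induction_disjoint σ σ' hd _ ih ih' =>
    rw [mul_assoc, hd.permLength_mul, add_assoc]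
    exact (ih _).trans (Nat.add_le_add_left (ih' τ) _)

lemma permLength_inv_mul_le (σ τ : Perm α) :
    permLength (σ⁻¹ * τ) ≤ permLength σ + permLength τ := by
  simpa using permLength_mul_le σ⁻¹ τ

end Triangle

lemma val_finRotate {n : ℕ} (i : Fin n) :
    (finRotate n i : ℕ) = if (i : ℕ) + 1 = n then 0 else (i : ℕ) + 1 := by
  obtain ⟨n, rfl⟩ : ∃ m, n = m + 1 := ⟨n - 1, by have := i.pos; omega⟩
  rw [coe_finRotate]
  simp [Fin.ext_iff]

lemma val_finRotate_symm {n : ℕ} (i : Fin n) :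
    ((finRotate n).symm i : ℕ) = if (i : ℕ) = 0 then n - 1 else (i : ℕ) - 1 := by
  have h := val_finRotate ((finRotate n).symm i)
  rw [Equiv.apply_symm_apply] at h
  have := ((finRotate n).symm i).isLt
  split_ifs at h ⊢ <;> omega

lemma deltaPerm_mul_self (p : ℕ) : deltaPerm p * deltaPerm p = 1 := by
  ext x; cases x <;> rfl

lemma permLength_deltaPerm (p : ℕ) : permLength (deltaPerm p) = p := by
  have h := two_mul_permLength_of_mul_self (deltaPerm_mul_self p)
  have : (deltaPerm p).support = Finset.univ := by
    ext x; cases x <;> simp [deltaPerm]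
  rw [this, Finset.card_univ, Fintype.card_sum, Fintype.card_fin] at h
  omega

section CycleEnum

variable (p : ℕ)

/-- The ground set listed along `γ̃`: `1^B, …, p^B, p^T, …, 1^T`. -/
def cycleEnum : Fin p ⊕ Fin p ≃ Fin (p + p) :=
  (Equiv.sumComm _ _).trans ((Equiv.sumCongr (Equiv.refl _) Fin.revPerm).trans finSumFinEquiv)

@[simp]
lemma val_cycleEnum_inl (i : Fin p) : (cycleEnum p (.inl i) : ℕ) = p + (p - (i + 1)) := by
  simp [cycleEnum, add_comm]

@[simp]
lemma val_cycleEnum_inr (i : Fin p) : (cycleEnum p (.inr i) : ℕ) = i := by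
  simp [cycleEnum]

lemma cycleEnum_deltaPerm (x : Fin p ⊕ Fin p) :
    cycleEnum p (deltaPerm p x) = (cycleEnum p x).rev := by
  rcases x with i | i <;> ext <;> simp [deltaPerm] <;> omega

variable {p} (hp : 0 < p)

lemma cycleEnum_gammaTilde (x : Fin p ⊕ Fin p) :
    cycleEnum p (gammaTilde p hp x) = finRotate _ (cycleEnum p x) := by
  apply Fin.ext
  rcases x with i | i <;>
  · have := i.isLt
    simp only [gammaTilde, gammaPerm, Perm.coe_mul, Function.comp_apply, Perm.sumCongr_apply,
      Sum.map_inl, Sum.map_inr, Perm.inv_def, swap_apply_def]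
    split_ifs <;> simp_all only [Sum.inl.injEq, Sum.inr.injEq, reduceCtorEq, Fin.ext_iff,
      val_finRotate, val_finRotate_symm, val_cycleEnum_inl, val_cycleEnum_inr] <;>
      split_ifs at * <;> omega

lemma cycleEnum_gammaTilde_inv (x : Fin p ⊕ Fin p) :
    cycleEnum p ((gammaTilde p hp)⁻¹ x) = (finRotate _).symm (cycleEnum p x) := by
  rw [Equiv.eq_symm_apply, ← cycleEnum_gammaTilde hp, Perm.inv_def, apply_symm_apply]

lemma permLength_gammaTilde : permLength (gammaTilde p hp) = 2 * p - 1 := by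
  have : gammaTilde p hp = (cycleEnum p).symm.permCongr (finRotate (p + p)) := by
    ext x
    rw [permCongr_apply, symm_symm, eq_symm_apply, cycleEnum_gammaTilde]
  rw [this, permLength_permCongr, (isCycle_finRotate_of_le (by omega)).permLength_eq,
    support_finRotate_of_le (by omega), Finset.card_univ, Fintype.card_fin]
  omega

lemma cycleEnum_deltaPerm_mul_gammaTilde_inv (x : Fin p ⊕ Fin p) :
    cycleEnum p ((deltaPerm p * (gammaTilde p hp)⁻¹) x) =
      ((finRotate _).symm (cycleEnum p x)).rev := by
  rw [Perm.mul_apply, cycleEnum_deltaPerm, cycleEnum_gammaTilde_inv]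

lemma deltaPerm_mul_gammaTilde_inv_mul_self :
    deltaPerm p * (gammaTilde p hp)⁻¹ * (deltaPerm p * (gammaTilde p hp)⁻¹) = 1 := by
  ext x : 1
  apply (cycleEnum p).injective
  have := (cycleEnum p x).isLt
  rw [Perm.mul_apply, cycleEnum_deltaPerm_mul_gammaTilde_inv,
    cycleEnum_deltaPerm_mul_gammaTilde_inv, Perm.one_apply]
  ext
  simp only [Fin.val_rev, val_finRotate_symm]
  split_ifs <;> omega

lemma permLength_deltaPerm_mul_gammaTilde_inv :
    permLength (deltaPerm p * (gammaTilde p hp)⁻¹) = p - 1 := by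
  set ε := deltaPerm p * (gammaTilde p hp)⁻¹
  -- `ε` fixes `1^B` and `p^T`, numbered `0` and `p` by `cycleEnum`
  have hfix (k : Fin (p + p)) (hk : (k : ℕ) = 0 ∨ (k : ℕ) = p) :
      ε ((cycleEnum p).symm k) = (cycleEnum p).symm k := by
    apply (cycleEnum p).injective
    rw [cycleEnum_deltaPerm_mul_gammaTilde_inv, apply_symm_apply]
    ext
    simp only [Fin.val_rev, val_finRotate_symm]
    split_ifs <;> omega
  have hsupp : ε.support ⊆
      Finset.univ \ {(cycleEnum p).symm ⟨0, by omega⟩, (cycleEnum p).symm ⟨p, by omega⟩} := by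
    intro x hx
    simp only [Finset.mem_sdiff, Finset.mem_univ, true_and, Finset.mem_insert,
      Finset.mem_singleton]
    rintro (rfl | rfl) <;> exact mem_support.1 hx (hfix _ (by simp))
  have upper : 2 * permLength ε ≤ p + p - 2 := by
    rw [two_mul_permLength_of_mul_self (deltaPerm_mul_gammaTilde_inv_mul_self hp)]
    refine (Finset.card_le_card hsupp).trans_eq ?_
    rw [Finset.card_sdiff_of_subset (Finset.subset_univ _), Finset.card_pair (by simp; omega),
      Finset.card_univ, Fintype.card_sum, Fintype.card_fin]
  have lower : 2 * p - 1 ≤ p + permLength ε := by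
    have := permLength_mul_le (deltaPerm p) ε
    rwa [← mul_assoc, deltaPerm_mul_self, one_mul, permLength_inv, permLength_gammaTilde,
      permLength_deltaPerm] at this
  omega

end CycleEnum

section Minimization

variable {p : ℕ} (hp : 0 < p) (β : Perm (Fin p ⊕ Fin p))

lemma triangle_bounds :
    (p : ℝ) ≤ permLength β + permLength (β * deltaPerm p) ∧
    2 * (p : ℝ) - 1 ≤ permLength β + permLength (β * (gammaTilde p hp)⁻¹) ∧
    (p : ℝ) - 1 ≤ permLength (β * deltaPerm p) + permLength (β * (gammaTilde p hp)⁻¹) ∧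
    (permLength (β * (gammaTilde p hp)⁻¹) : ℝ) ≤
      permLength (β * deltaPerm p) + ((p : ℝ) - 1) := by
  have hδ : (deltaPerm p)⁻¹ = deltaPerm p := inv_eq_of_mul_eq_one_right (deltaPerm_mul_self p)
  have h1 := permLength_inv_mul_le β (β * deltaPerm p)
  have h2 := permLength_inv_mul_le β (β * (gammaTilde p hp)⁻¹)
  have h3 := permLength_inv_mul_le (β * deltaPerm p) (β * (gammaTilde p hp)⁻¹)
  have h4 := permLength_mul_le (β * deltaPerm p) (deltaPerm p * (gammaTilde p hp)⁻¹)
  rw [inv_mul_cancel_left, permLength_deltaPerm] at h1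
  rw [inv_mul_cancel_left, permLength_inv, permLength_gammaTilde] at h2
  rw [mul_inv_rev, hδ, mul_assoc, inv_mul_cancel_left,
    permLength_deltaPerm_mul_gammaTilde_inv] at h3
  rw [mul_assoc, ← mul_assoc (deltaPerm p), deltaPerm_mul_self, one_mul,
    permLength_deltaPerm_mul_gammaTilde_inv] at h4
  have h1p : 1 ≤ p := hp
  have h2p : 1 ≤ 2 * p := by omega
  rify [h1p, h2p] at h1 h2 h3 h4
  exact ⟨h1, h2, h3, h4⟩

lemma S2_deltaPerm (d : ℝ) : S2 p hp d (deltaPerm p) = d * p - 1 := by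
  have h1p : 1 ≤ p := hp
  rw [S2, deltaPerm_mul_self, permLength_one, permLength_deltaPerm,
    permLength_deltaPerm_mul_gammaTilde_inv, Nat.cast_sub h1p]
  push_cast
  ring

lemma S2_one (d : ℝ) : S2 p hp d 1 = 2 * p - 1 := by
  have h1p : 1 ≤ 2 * p := by omega
  rw [S2, one_mul, one_mul, permLength_one, permLength_inv, permLength_gammaTilde,
    permLength_deltaPerm, Nat.cast_sub h1p]
  push_cast
  ring

lemma S2_minimization_zero : -1 ≤ S2 p hp 0 β ∧ (S2 p hp 0 β = -1 ↔
    permLength (β * deltaPerm p) + permLength (β * (gammaTilde p hp)⁻¹) = p - 1) := by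
  obtain ⟨-, -, h3, -⟩ := triangle_bounds hp β
  have h1p : 1 ≤ p := hp
  rw [S2, zero_mul, zero_add]
  rify [h1p]
  exact ⟨by linarith, by constructor <;> intro h <;> linarith⟩

lemma S2_minimization_of_pos_of_lt_two {d : ℝ} (hd₀ : 0 < d) (hd₂ : d < 2) :
    d * p - 1 ≤ S2 p hp d β ∧ (S2 p hp d β = d * p - 1 ↔ β = deltaPerm p) := by
  obtain ⟨h1, h2, h3, -⟩ := triangle_bounds hp β
  set A : ℝ := (permLength β : ℝ)
  set G : ℝ := (permLength (β * (gammaTilde p hp)⁻¹) : ℝ)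
  set D : ℝ := (permLength (β * deltaPerm p) : ℝ) with hD_def
  have key : 2 * (S2 p hp d β - (d * p - 1)) =
      d * (A + D - p) + d * (A + G - (2 * p - 1)) + (2 - d) * (D + G - (p - 1)) := by
    simp only [S2, A, G, D]; ring
  have s1 := mul_nonneg hd₀.le (sub_nonneg.2 h1)
  have s2 := mul_nonneg hd₀.le (sub_nonneg.2 h2)
  have s3 := mul_nonneg (sub_nonneg.2 hd₂.le) (sub_nonneg.2 h3)
  refine ⟨by linarith, fun h => ?_, fun h => h ▸ S2_deltaPerm hp d⟩
  -- equality forces all three triangle inequalities to be tight, whence `|βδ| = 0`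
  have t1 := (mul_eq_zero.1 (by linarith : d * (A + D - p) = 0)).resolve_left hd₀.ne'
  have t2 := (mul_eq_zero.1 (by linarith : d * (A + G - (2 * p - 1)) = 0)).resolve_left hd₀.ne'
  have t3 := (mul_eq_zero.1 (by linarith : (2 - d) * (D + G - (p - 1)) = 0)).resolve_left
    (by linarith)
  have hD : D = 0 := by linarith
  rw [hD_def, Nat.cast_eq_zero, permLength_eq_zero_iff, mul_eq_one_iff_eq_inv] at hD
  rw [hD, inv_eq_of_mul_eq_one_right (deltaPerm_mul_self p)]

lemma S2_minimization_two : 2 * (p : ℝ) - 1 ≤ S2 p hp 2 β ∧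
    (S2 p hp 2 β = 2 * (p : ℝ) - 1 ↔ permLength β + permLength (β * deltaPerm p) = p) := by
  obtain ⟨h1, h2, -, h4⟩ := triangle_bounds hp β
  rw [S2]
  rify
  exact ⟨by linarith, by constructor <;> intro h <;> linarith⟩

lemma S2_minimization_of_two_lt {d : ℝ} (hd : 2 < d) :
    2 * (p : ℝ) - 1 ≤ S2 p hp d β ∧ (S2 p hp d β = 2 * (p : ℝ) - 1 ↔ β = 1) := by
  obtain ⟨h1, h2, -, -⟩ := triangle_bounds hp β
  have hA : (0 : ℝ) ≤ permLength β := Nat.cast_nonneg _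
  have key : S2 p hp d β - (2 * p - 1) = (d - 2) * permLength β +
      (permLength β + permLength (β * deltaPerm p) - p) +
      (permLength β + permLength (β * (gammaTilde p hp)⁻¹) - (2 * p - 1)) := by
    rw [S2]; ring
  have s := mul_nonneg (sub_nonneg.2 hd.le) hA
  refine ⟨by linarith, fun h => ?_, fun h => h ▸ S2_one hp d⟩
  have : (d - 2) * permLength β = 0 := by linarith
  rw [← permLength_eq_zero_iff]
  exact_mod_cast (mul_eq_zero.1 this).resolve_left (by linarith)

end Minimization

theorem S2_minimization_general (p : ℕ) (hp : 0 < p) (d : ℝ) :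
    (d = 0 → ∀ β : Equiv.Perm (Fin p ⊕ Fin p),
      (-1 : ℝ) ≤ S2 p hp d β ∧
        (S2 p hp d β = -1 ↔
          permLength (β * deltaPerm p) + permLength (β * (gammaTilde p hp)⁻¹) = p - 1)) ∧
    ((0 < d ∧ d < 2) → ∀ β : Equiv.Perm (Fin p ⊕ Fin p),
      d * p - 1 ≤ S2 p hp d β ∧ (S2 p hp d β = d * p - 1 ↔ β = deltaPerm p)) ∧
    (d = 2 → ∀ β : Equiv.Perm (Fin p ⊕ Fin p),
      2 * (p : ℝ) - 1 ≤ S2 p hp d β ∧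
        (S2 p hp d β = 2 * (p : ℝ) - 1 ↔
          permLength β + permLength (β * deltaPerm p) = p)) ∧
    (2 < d → ∀ β : Equiv.Perm (Fin p ⊕ Fin p),
      2 * (p : ℝ) - 1 ≤ S2 p hp d β ∧ (S2 p hp d β = 2 * (p : ℝ) - 1 ↔ β = 1)) := by
  refine ⟨?_, fun hd β => S2_minimization_of_pos_of_lt_two hp β hd.1 hd.2, ?_,
    fun hd β => S2_minimization_of_two_lt hp β hd⟩
  · rintro rfl β
    exact S2_minimization_zero hp β
  · rintro rfl β
    exact S2_minimization_two hp β

/-- **Minimization of `S₂` (Table 1).** For `p ≥ 1` and `d ≥ 0`: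
if `d = 0` then `S₂ ≥ −1` with equality iff `β` lies on the geodesic from `δ` to `γ̃`;
if `0 < d < 2` then `S₂ ≥ dp − 1` with equality iff `β = δ`;
if `d = 2` then `S₂ ≥ 2p − 1` with equality iff `β` lies on the geodesic from `id` to `δ`;
if `d > 2` then `S₂ ≥ 2p − 1` with equality iff `β = id`. -/
theorem S2_minimization (p : ℕ) (hp : 0 < p) (d : ℝ) (hd : 0 ≤ d) :
    (d = 0 → ∀ β : Equiv.Perm (Fin p ⊕ Fin p),
      (-1 : ℝ) ≤ S2 p hp d β ∧
        (S2 p hp d β = -1 ↔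
          permLength (β * deltaPerm p) + permLength (β * (gammaTilde p hp)⁻¹) = p - 1)) ∧
    ((0 < d ∧ d < 2) → ∀ β : Equiv.Perm (Fin p ⊕ Fin p),
      d * p - 1 ≤ S2 p hp d β ∧ (S2 p hp d β = d * p - 1 ↔ β = deltaPerm p)) ∧
    (d = 2 → ∀ β : Equiv.Perm (Fin p ⊕ Fin p),
      2 * (p : ℝ) - 1 ≤ S2 p hp d β ∧
        (S2 p hp d β = 2 * (p : ℝ) - 1 ↔
          permLength β + permLength (β * deltaPerm p) = p)) ∧
    (2 < d → ∀ β : Equiv.Perm (Fin p ⊕ Fin p),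
      2 * (p : ℝ) - 1 ≤ S2 p hp d β ∧ (S2 p hp d β = 2 * (p : ℝ) - 1 ↔ β = 1)) :=
  S2_minimization_general p hp d
end
end
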